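/- arXiv:2512.18530 — 2 statements merged into one kernel-verified Lean document; each statement's English description precedes it below -/
import Mathlib

section
/- Let φ be an analytic contraction family on g and B an analytic bracket family for φ. If c₁ and c₂ lie in Γ(g)_φ, then the pointwise bracket ε ↦ ⁅c₁(ε), c₂(ε)⁆ also lies in Γ(g)_φ. (Hence Γ(g)_φ is a Lie subalgebra of the Lie algebra of germs at 0 of analytic curves in g with pointwise bracket.) -/
open scoped Topology
open Filter

/-!
Put `c̃ ε = B ε (c̃₁ ε) (c̃₂ ε)`, which is analytic at `0`. For `ε ≠ 0` the bracket relation gives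
`⁅c₁ ε, c₂ ε⁆ = ⁅φ ε (c̃₁ ε), φ ε (c̃₂ ε)⁆ = φ ε (c̃ ε)`, and since both sides are continuous at `0`
(each `cᵢ` agrees near `0` with `φ c̃ᵢ`, and the Lie bracket is continuous) the identity persists
at `ε = 0`. Thus `⁅c₁, c₂⁆` coincides near `0` with the analytic curve `ε ↦ φ ε (c̃ ε)`.
-/

theorem AnalyticAt.clm_apply {𝕜 X E F : Type*} [NontriviallyNormedField 𝕜]
    [NormedAddCommGroup X] [NormedSpace 𝕜 X]
    [NormedAddCommGroup E] [NormedSpace 𝕜 E]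
    [NormedAddCommGroup F] [NormedSpace 𝕜 F]
    {f : X → E →L[𝕜] F} {c : X → E} {x : X}
    (hf : AnalyticAt 𝕜 f x) (hc : AnalyticAt 𝕜 c x) :
    AnalyticAt 𝕜 (fun y => f y (c y)) x :=
  AnalyticAt.comp (f := fun y => (f y, c y))
    ((ContinuousLinearMap.apply 𝕜 F).flip.analyticAt_bilinear (f x, c x)) (hf.prod hc)

theorem bracket_eventuallyEq_nhdsNE_apply_bracketFamily {g : Type*}
    [NormedAddCommGroup g] [NormedSpace ℝ g] [Bracket g g]
    {φ : ℝ → g →L[ℝ] g} {B : ℝ → g →L[ℝ] g →L[ℝ] g}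
    (hBφ : ∀ ε : ℝ, ε ≠ 0 → ∀ X Y : g, φ ε (B ε X Y) = ⁅φ ε X, φ ε Y⁆)
    {c₁ c₂ c₁t c₂t : ℝ → g}
    (hc₁eq : ∀ᶠ ε in 𝓝 (0 : ℝ), c₁ ε = φ ε (c₁t ε))
    (hc₂eq : ∀ᶠ ε in 𝓝 (0 : ℝ), c₂ ε = φ ε (c₂t ε)) :
    (fun ε => ⁅c₁ ε, c₂ ε⁆) =ᶠ[𝓝[≠] 0] fun ε => φ ε (B ε (c₁t ε) (c₂t ε)) := by
  filter_upwards [nhdsWithin_le_nhds hc₁eq, nhdsWithin_le_nhds hc₂eq, self_mem_nhdsWithin]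
    with ε h₁ h₂ (hε : ε ≠ 0)
  rw [h₁, h₂, hBφ ε hε]

theorem germs_phi_closed_under_bracket_general
    {g : Type*} [NormedAddCommGroup g] [NormedSpace ℝ g]
    [LieRing g]
    (hbracket : Continuous fun p : g × g => ⁅p.1, p.2⁆)
    (φ : ℝ → (@ContinuousLinearMap ℝ ℝ _ _ (RingHom.id ℝ) g _ NormedAddCommGroup.toAddCommGroup.toAddCommMonoid g _ NormedAddCommGroup.toAddCommGroup.toAddCommMonoid NormedSpace.toModule NormedSpace.toModule))
    (hφ : AnalyticAt ℝ φ 0)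
    (B : ℝ → (@ContinuousLinearMap ℝ ℝ _ _ (RingHom.id ℝ) g _ NormedAddCommGroup.toAddCommGroup.toAddCommMonoid (@ContinuousLinearMap ℝ ℝ _ _ (RingHom.id ℝ) g _ NormedAddCommGroup.toAddCommGroup.toAddCommMonoid g _ NormedAddCommGroup.toAddCommGroup.toAddCommMonoid NormedSpace.toModule NormedSpace.toModule) _ _ NormedSpace.toModule _))
    (hB : AnalyticAt ℝ B 0)
    (hBφ : ∀ ε : ℝ, ε ≠ 0 → ∀ X Y : g, φ ε (B ε X Y) = ⁅φ ε X, φ ε Y⁆)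
    (c₁ c₂ : ℝ → g)
    (c₁t : ℝ → g) (hc₁t : AnalyticAt ℝ c₁t 0)
    (hc₁eq : ∀ᶠ ε in 𝓝 (0 : ℝ), c₁ ε = φ ε (c₁t ε))
    (c₂t : ℝ → g) (hc₂t : AnalyticAt ℝ c₂t 0)
    (hc₂eq : ∀ᶠ ε in 𝓝 (0 : ℝ), c₂ ε = φ ε (c₂t ε)) :
    AnalyticAt ℝ (fun ε => ⁅c₁ ε, c₂ ε⁆) 0 ∧
    ∃ et : ℝ → g, AnalyticAt ℝ et 0 ∧
      ∀ᶠ ε in 𝓝 (0 : ℝ), ⁅c₁ ε, c₂ ε⁆ = φ ε (et ε) := by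
  set et : ℝ → g := fun ε => B ε (c₁t ε) (c₂t ε)
  have het : AnalyticAt ℝ et 0 := (hB.clm_apply hc₁t).clm_apply hc₂t
  have hφet : AnalyticAt ℝ (fun ε => φ ε (et ε)) 0 := hφ.clm_apply het
  have hc₁ : ContinuousAt c₁ 0 :=
    (hφ.clm_apply hc₁t).continuousAt.congr (EventuallyEq.symm hc₁eq)
  have hc₂ : ContinuousAt c₂ 0 :=
    (hφ.clm_apply hc₂t).continuousAt.congr (EventuallyEq.symm hc₂eq)
  have hbracket₀ : ContinuousAt (fun ε => ⁅c₁ ε, c₂ ε⁆) 0 :=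
    hbracket.continuousAt.comp (hc₁.prodMk hc₂)
  have heq : (fun ε => ⁅c₁ ε, c₂ ε⁆) =ᶠ[𝓝 0] fun ε => φ ε (et ε) :=
    (hbracket₀.eventuallyEq_nhds_iff_eventuallyEq_nhdsNE hφet.continuousAt).1
      (bracket_eventuallyEq_nhdsNE_apply_bracketFamily hBφ hc₁eq hc₂eq)
  exact ⟨hφet.congr heq.symm, et, het, heq⟩

/-- Let `φ` be an analytic contraction family on `g` and `B`
an analytic bracket family for `φ`. If `c₁`, `c₂` lie in `Γ(g)_φ`, then so does
the pointwise bracket `ε ↦ ⁅c₁ ε, c₂ ε⁆`; hence `Γ(g)_φ` is a Lie subalgebra of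
the Lie algebra of germs at `0` of analytic curves in `g`. -/
theorem germs_phi_closed_under_bracket
    {g : Type*} [NormedAddCommGroup g] [NormedSpace ℝ g] [CompleteSpace g]
    [LieRing g] [LieAlgebra ℝ g]
    (hbracket : Continuous fun p : g × g => ⁅p.1, p.2⁆)
    (φ : ℝ → (@ContinuousLinearMap ℝ ℝ _ _ (RingHom.id ℝ) g _ NormedAddCommGroup.toAddCommGroup.toAddCommMonoid g _ NormedAddCommGroup.toAddCommGroup.toAddCommMonoid NormedSpace.toModule NormedSpace.toModule))
    (hφ : AnalyticAt ℝ φ 0)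
    (hbij : ∀ ε : ℝ, ε ≠ 0 → Function.Bijective (φ ε))
    (B : ℝ → (@ContinuousLinearMap ℝ ℝ _ _ (RingHom.id ℝ) g _ NormedAddCommGroup.toAddCommGroup.toAddCommMonoid (@ContinuousLinearMap ℝ ℝ _ _ (RingHom.id ℝ) g _ NormedAddCommGroup.toAddCommGroup.toAddCommMonoid g _ NormedAddCommGroup.toAddCommGroup.toAddCommMonoid NormedSpace.toModule NormedSpace.toModule) _ _ NormedSpace.toModule _))
    (hB : AnalyticAt ℝ B 0)
    (hBφ : ∀ ε : ℝ, ε ≠ 0 → ∀ X Y : g, φ ε (B ε X Y) = ⁅φ ε X, φ ε Y⁆)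
    (c₁ c₂ : ℝ → g)
    (hc₁ : AnalyticAt ℝ c₁ 0) (hc₂ : AnalyticAt ℝ c₂ 0)
    (c₁t : ℝ → g) (hc₁t : AnalyticAt ℝ c₁t 0)
    (hc₁eq : ∀ᶠ ε in 𝓝 (0 : ℝ), c₁ ε = φ ε (c₁t ε))
    (c₂t : ℝ → g) (hc₂t : AnalyticAt ℝ c₂t 0)
    (hc₂eq : ∀ᶠ ε in 𝓝 (0 : ℝ), c₂ ε = φ ε (c₂t ε)) :
    AnalyticAt ℝ (fun ε => ⁅c₁ ε, c₂ ε⁆) 0 ∧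
    ∃ et : ℝ → g, AnalyticAt ℝ et 0 ∧
      ∀ᶠ ε in 𝓝 (0 : ℝ), ⁅c₁ ε, c₂ ε⁆ = φ ε (et ε) :=
  germs_phi_closed_under_bracket_general hbracket φ hφ B hB hBφ c₁ c₂ c₁t hc₁t hc₁eq c₂t hc₂t hc₂eq
end

section
/- Let φ be an analytic contraction family on g and B an analytic bracket family for φ. For all X, Y ∈ g there exists a map d̃ : ℝ → g analytic at 0 such that ⁅φ_ε(X), φ_ε(Y)⁆ = φ_ε(B_0(X,Y)) + ε·φ_ε(d̃(ε)) for all ε in a neighbourhood of 0. (Thus the map Ψ : X ↦ (ε ↦ φ_ε(X)) is a Lie algebra homomorphism from the contraction (g, B_0) into Γ(g)_φ modulo the ideal ε·Γ(g)_φ; this is the homomorphism part of the proposition identifying the order-0 Lie algebra expansion with the contraction.) -/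
open scoped Topology

attribute [local instance 2000] NormedAddCommGroup.toAddCommGroup NormedSpace.toModule

/-!
Write `B ε X Y = B 0 X Y + ε • dslope (B · X Y) 0 ε`; the slope is analytic at `0` because
`ε ↦ B ε X Y` is. Applying `φ ε` turns the left side into `⁅φ ε X, φ ε Y⁆`: for `ε ≠ 0` this is
the bracket-family relation, and at `ε = 0` it follows from it by continuity of both sides.
-/

open Filter

theorem AnalyticAt.dslope {𝕜 E : Type*} [NontriviallyNormedField 𝕜] [NormedAddCommGroup E]
    [NormedSpace 𝕜 E] {f : 𝕜 → E} {a : 𝕜} (hf : AnalyticAt 𝕜 f a) :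
    AnalyticAt 𝕜 (dslope f a) a :=
  let ⟨_, hp⟩ := hf
  hp.has_fpower_series_dslope_fslope.analyticAt

theorem AnalyticAt.clm_apply_apply {𝕜 E F G H : Type*} [NontriviallyNormedField 𝕜]
    [NormedAddCommGroup E] [NormedSpace 𝕜 E] [NormedAddCommGroup F] [NormedSpace 𝕜 F]
    [NormedAddCommGroup G] [NormedSpace 𝕜 G] [NormedAddCommGroup H] [NormedSpace 𝕜 H]
    {B : E → F →L[𝕜] G →L[𝕜] H} {a : E} (hB : AnalyticAt 𝕜 B a) (x : F) (y : G) :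
    AnalyticAt 𝕜 (fun e => B e x y) a := by
  -- `by exact` delays unifying the `Module` instances, which the local instance attribute
  -- above makes differ syntactically from those of `ContinuousLinearMap.apply`.
  have hBx : AnalyticAt 𝕜 (fun e => B e x) a := by
    exact ((ContinuousLinearMap.apply 𝕜 (G →L[𝕜] H) x).analyticAt _).comp hB
  exact ((ContinuousLinearMap.apply 𝕜 H y).analyticAt _).comp hBx

theorem map_bracket_of_continuousAt {𝕜 g : Type*} [NontriviallyNormedField 𝕜]
    [NormedAddCommGroup g] [NormedSpace 𝕜 g] [Bracket g g]
    (hbracket : Continuous fun p : g × g => ⁅p.1, p.2⁆)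
    {φ : 𝕜 → (g →L[𝕜] g)} {B : 𝕜 → (g →L[𝕜] g →L[𝕜] g)} {a : 𝕜}
    (hφ : ContinuousAt φ a) (hB : ContinuousAt B a)
    (hBφ : ∀ ε, ε ≠ a → ∀ X Y : g, φ ε (B ε X Y) = ⁅φ ε X, φ ε Y⁆) (ε : 𝕜) (X Y : g) :
    φ ε (B ε X Y) = ⁅φ ε X, φ ε Y⁆ := by
  rcases ne_or_eq ε a with hε | rfl
  · exact hBφ ε hε X Y
  have hlhs : ContinuousAt (fun ε => φ ε (B ε X Y)) ε := by fun_prop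
  have hrhs : ContinuousAt (fun ε => ⁅φ ε X, φ ε Y⁆) ε :=
    hbracket.continuousAt.comp (f := fun ε => (φ ε X, φ ε Y)) (by fun_prop)
  have hne : (fun ε => φ ε (B ε X Y)) =ᶠ[𝓝[≠] ε] fun ε => ⁅φ ε X, φ ε Y⁆ :=
    eventually_nhdsWithin_of_forall fun ε' hε' => hBφ ε' hε' X Y
  exact ((hlhs.eventuallyEq_nhds_iff_eventuallyEq_nhdsNE hrhs).1 hne).eq_of_nhds

theorem Psi_hom_modulo_epsilon_general
    {g : Type*} [NormedAddCommGroup g] [NormedSpace ℝ g]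
    [LieRing g]
    (hbracket : Continuous fun p : g × g => ⁅p.1, p.2⁆)
    (φ : ℝ → (g →L[ℝ] g))
    (hφ : AnalyticAt ℝ φ 0)
    (B : ℝ → (g →L[ℝ] g →L[ℝ] g))
    (hB : AnalyticAt ℝ B 0)
    (hBφ : ∀ ε : ℝ, ε ≠ 0 → ∀ X Y : g, φ ε (B ε X Y) = ⁅φ ε X, φ ε Y⁆) :
    ∀ X Y : g, ∃ dt : ℝ → g, AnalyticAt ℝ dt 0 ∧
      ∀ᶠ ε in 𝓝 (0 : ℝ),
        ⁅φ ε X, φ ε Y⁆ = φ ε (B 0 X Y) + ε • φ ε (dt ε) := by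
  intro X Y
  refine ⟨dslope (fun ε => B ε X Y) 0, (hB.clm_apply_apply X Y).dslope,
    Eventually.of_forall fun ε => ?_⟩
  have hsplit : B ε X Y = B 0 X Y + ε • dslope (fun ε => B ε X Y) 0 ε := by
    have h := sub_smul_dslope (fun ε => B ε X Y) 0 ε
    simp only [sub_zero] at h
    rw [h, add_sub_cancel]
  rw [← map_bracket_of_continuousAt hbracket hφ.continuousAt hB.continuousAt hBφ, hsplit,
    map_add, map_smul]

/-- Let `φ` be an analytic contraction family on `g` and `B`
an analytic bracket family for `φ`. For all `X, Y ∈ g` there exists a map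
`d̃ : ℝ → g` analytic at `0` with
`⁅φ_ε X, φ_ε Y⁆ = φ_ε (B 0 X Y) + ε • φ_ε (d̃ ε)` near `0`; thus
`Ψ : X ↦ (ε ↦ φ_ε X)` is a Lie algebra homomorphism from `(g, B 0)` into
`Γ(g)_φ` modulo the ideal `ε·Γ(g)_φ`. -/
theorem Psi_hom_modulo_epsilon
    {g : Type*} [NormedAddCommGroup g] [NormedSpace ℝ g] [CompleteSpace g]
    [LieRing g] [LieAlgebra ℝ g]
    (hbracket : Continuous fun p : g × g => ⁅p.1, p.2⁆)
    (φ : ℝ → (g →L[ℝ] g))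
    (hφ : AnalyticAt ℝ φ 0)
    (hbij : ∀ ε : ℝ, ε ≠ 0 → Function.Bijective (φ ε))
    (B : ℝ → (g →L[ℝ] g →L[ℝ] g))
    (hB : AnalyticAt ℝ B 0)
    (hBφ : ∀ ε : ℝ, ε ≠ 0 → ∀ X Y : g, φ ε (B ε X Y) = ⁅φ ε X, φ ε Y⁆) :
    ∀ X Y : g, ∃ dt : ℝ → g, AnalyticAt ℝ dt 0 ∧
      ∀ᶠ ε in 𝓝 (0 : ℝ),
        ⁅φ ε X, φ ε Y⁆ = φ ε (B 0 X Y) + ε • φ ε (dt ε) :=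
  Psi_hom_modulo_epsilon_general hbracket φ hφ B hB hBφ
end
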